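/- arXiv:math/0406594 — 3 statements merged into one kernel-verified Lean document; each statement's English description precedes it below -/
import Mathlib

section
/- Let X ⊆ ℝ^n be a nonempty (possibly unbounded) open set, let F : X × ℝ^M → ℝ be jointly continuous, and let f : X → ℝ be continuous with f(x) ∈ int R_x for every x ∈ X. Then for every x₀ ∈ X and every ε > 0 there exist δ > 0 and a polynomial function P : ℝ^n → ℝ such that for all x ∈ X with ‖x − x₀‖ ≤ δ one has f(x) − ε ≤ T(x,D)P(x) ≤ f(x). -/
/-!
Pick a value `F x₀ ξ` of `F x₀` in `(f x₀ - ε, f x₀)`, which exists because `f x₀` is interior to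
`R_{x₀}`. The polynomial `P = ∑_k ξ_k / e_k! • (X - x₀)^{e_k}` has `D^{e_k} P (x₀) = ξ_k`, so
`x ↦ T(x,D)P(x) - f x` is continuous on `X` and lies in `(-ε, 0)` at `x₀`, hence near `x₀`.
-/

open Set Topology Filter

/-- The partial derivative of `f` in the `i`-th coordinate direction. -/
noncomputable def pder {n : ℕ} (i : Fin n) (f : (Fin n → ℝ) → ℝ) : (Fin n → ℝ) → ℝ :=
  fun x => fderiv ℝ f x (Pi.single i 1)

/-- The multi-index partial derivative `D^p f` for a multi-index `p : Fin n → ℕ`. -/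
noncomputable def mderiv {n : ℕ} (p : Fin n → ℕ) (f : (Fin n → ℝ) → ℝ) : (Fin n → ℝ) → ℝ :=
  (List.finRange n).foldr (fun i g => (pder i)^[p i] g) f

/-- The nonlinear partial differential operator `T(x,D)` associated to `F`, where
`e : Fin M → (Fin n → ℕ)` enumerates the multi-indices `p` with `|p| ≤ m`:
`T(x,D)U(x) = F(x, (D^p U(x))_{|p| ≤ m})`. -/
noncomputable def TOp {n M : ℕ} (e : Fin M → (Fin n → ℕ))
    (F : (Fin n → ℝ) → (Fin M → ℝ) → ℝ) (U : (Fin n → ℝ) → ℝ) : (Fin n → ℝ) → ℝ :=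
  fun x => F x (fun i => mderiv (e i) U x)

open MvPolynomial

section Algebra

variable {R σ : Type*}

noncomputable def iteratedPDeriv [CommSemiring R] (l : List σ) (p : σ → ℕ) :
    Module.End R (MvPolynomial σ R) :=
  l.foldr (fun i L => (pderiv i).toLinearMap ^ p i * L) 1

theorem iterate_pderiv_mul_of_pderiv_eq_zero [CommSemiring R] {i : σ} {B : MvPolynomial σ R}
    (hB : pderiv i B = 0) (k : ℕ) (A : MvPolynomial σ R) :
    (pderiv i)^[k] (A * B) = (pderiv i)^[k] A * B := by
  induction k generalizing A with
  | zero => rfl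
  | succ k ih => rw [Function.iterate_succ_apply, Function.iterate_succ_apply, pderiv_mul, hB,
      mul_zero, add_zero, ih]

variable [CommRing R]

theorem pderiv_X_sub_C_pow_of_ne {i j : σ} (h : j ≠ i) (c : R) (b : ℕ) :
    pderiv i ((X j - C c) ^ b : MvPolynomial σ R) = 0 := by
  simp [pderiv_X_of_ne h]

theorem iterate_pderiv_X_sub_C_pow (j : σ) (c : R) (a b : ℕ) :
    (pderiv j)^[a] ((X j - C c) ^ b : MvPolynomial σ R)
      = b.descFactorial a • (X j - C c) ^ (b - a) := by
  induction a with
  | zero => simp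
  | succ a ih =>
    rw [Function.iterate_succ_apply', ih, map_nsmul, pderiv_pow]
    simp only [map_sub, pderiv_X_self, pderiv_C, sub_zero, mul_one, nsmul_eq_mul,
      Nat.descFactorial_succ, Nat.cast_mul, Nat.sub_sub]
    ring

theorem iteratedPDeriv_prod_X_sub_C_pow [Fintype σ] [DecidableEq σ] {l : List σ} (hl : l.Nodup)
    (c : σ → R) (p q : σ → ℕ) :
    iteratedPDeriv l p (∏ j, (X j - C (c j)) ^ q j)
      = ∏ j, if j ∈ l then (q j).descFactorial (p j) • (X j - C (c j)) ^ (q j - p j)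
          else (X j - C (c j)) ^ q j := by
  induction l with
  | nil => simp [iteratedPDeriv]
  | cons i l ih =>
    obtain ⟨hi, hl⟩ := List.nodup_cons.mp hl
    set g : σ → MvPolynomial σ R := fun j => if j ∈ l then
      (q j).descFactorial (p j) • (X j - C (c j)) ^ (q j - p j) else (X j - C (c j)) ^ q j
    have hrest : pderiv i (∏ j ∈ Finset.univ.erase i, g j) = 0 := by
      refine Finset.prod_induction g (fun A => pderiv i A = 0) (fun a b ha hb => ?_) (by simp)
        fun j hj => ?_
      · simp [ha, hb]
      · have hji := Finset.ne_of_mem_erase hj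
        by_cases hjl : j ∈ l <;> simp [g, hjl, pderiv_X_sub_C_pow_of_ne hji]
    have h1 := ih hl
    simp only [iteratedPDeriv, List.foldr_cons, Module.End.mul_apply, Module.End.pow_apply,
      Derivation.coeFn_coe] at h1 ⊢
    rw [h1, ← Finset.mul_prod_erase _ _ (Finset.mem_univ i),
      iterate_pderiv_mul_of_pderiv_eq_zero hrest, ← Finset.mul_prod_erase _ _ (Finset.mem_univ i)]
    congr 1
    · simp [hi, iterate_pderiv_X_sub_C_pow]
    · refine Finset.prod_congr rfl fun j hj => ?_
      simp [g, Finset.ne_of_mem_erase hj]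

theorem eval_iteratedPDeriv_prod_X_sub_C_pow [Fintype σ] [DecidableEq σ] {l : List σ}
    (hl : l.Nodup) (hmem : ∀ j, j ∈ l) (c : σ → R) (p q : σ → ℕ) :
    eval c (iteratedPDeriv l p (∏ j, (X j - C (c j)) ^ q j))
      = if p = q then ∏ j, ((q j).factorial : R) else 0 := by
  rw [iteratedPDeriv_prod_X_sub_C_pow hl, map_prod]
  split_ifs with hpq
  · subst hpq
    simp [hmem, Nat.descFactorial_self]
  · obtain ⟨j, hj⟩ : ∃ j, p j ≠ q j := Function.ne_iff.mp hpq
    refine Finset.prod_eq_zero (Finset.mem_univ j) ?_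
    rcases hj.lt_or_gt with hlt | hgt
    · simp [hmem, Nat.sub_ne_zero_of_lt hlt]
    · simp [hmem, Nat.descFactorial_eq_zero_iff_lt.mpr hgt]

end Algebra

theorem exists_eval_iteratedPDeriv_eq {K σ ι : Type*} [Field K] [CharZero K] [Fintype σ]
    [DecidableEq σ] [Fintype ι] {l : List σ} (hl : l.Nodup) (hmem : ∀ j, j ∈ l)
    {e : ι → σ → ℕ} (he : Function.Injective e) (c : σ → K) (ξ : ι → K) :
    ∃ P : MvPolynomial σ K, ∀ k, eval c (iteratedPDeriv l (e k) P) = ξ k := by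
  refine ⟨∑ k, (ξ k / ∏ j, ((e k j).factorial : K)) • ∏ j, (X j - C (c j)) ^ e k j,
    fun k => ?_⟩
  have hfac : ∏ j, ((e k j).factorial : K) ≠ 0 :=
    Finset.prod_ne_zero_iff.mpr fun j _ => Nat.cast_ne_zero.mpr (Nat.factorial_ne_zero _)
  simp only [map_sum, map_smul, smul_eval, eval_iteratedPDeriv_prod_X_sub_C_pow hl hmem]
  rw [Finset.sum_eq_single k (fun k' _ hk' => by simp [he.ne hk'.symm]) (by simp)]
  simp [hfac]

theorem fderiv_eval_single {𝕜 σ : Type*} [NontriviallyNormedField 𝕜] [CompleteSpace 𝕜]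
    [Fintype σ] [DecidableEq σ] (P : MvPolynomial σ 𝕜) (x : σ → 𝕜) (i : σ) :
    fderiv 𝕜 (eval · P) x (Pi.single i 1) = eval x (pderiv i P) := by
  have hdiff (Q : MvPolynomial σ 𝕜) : DifferentiableAt 𝕜 (eval · Q) x :=
    (AnalyticOnNhd.eval_mvPolynomial Q x trivial).differentiableAt
  induction P using MvPolynomial.induction_on with
  | C a => simp
  | add p q hp hq =>
    simp only [map_add]
    rw [fderiv_fun_add (hdiff p) (hdiff q)]
    simp [hp, hq]
  | mul_X p j hp =>
    simp only [eval_mul, eval_X]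
    rw [fderiv_fun_mul (hdiff p) (differentiableAt_apply j x)]
    simp [hp, (hasFDerivAt_apply j x).fderiv, Pi.single_apply, pderiv_X, eq_comm,
      apply_ite (eval x)]

theorem pder_eval {n : ℕ} (i : Fin n) (P : MvPolynomial (Fin n) ℝ) :
    pder i (eval · P) = (eval · (pderiv i P)) :=
  funext fun x => fderiv_eval_single P x i

theorem mderiv_eval {n : ℕ} (p : Fin n → ℕ) (P : MvPolynomial (Fin n) ℝ) :
    mderiv p (eval · P) = (eval · (iteratedPDeriv (List.finRange n) p P)) := by
  unfold mderiv iteratedPDeriv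
  induction List.finRange n with
  | nil => rfl
  | cons i l ih =>
    simp only [List.foldr_cons, ih, Module.End.mul_apply, Module.End.pow_apply,
      Derivation.coeFn_coe]
    have h : Function.Semiconj (fun Q x => eval x Q) (pderiv i) (pder i) :=
      fun Q => (pder_eval i Q).symm
    exact (h.iterate_right (p i) _).symm

theorem TOp_eval {n M : ℕ} (e : Fin M → (Fin n → ℕ)) (F : (Fin n → ℝ) → (Fin M → ℝ) → ℝ)
    (P : MvPolynomial (Fin n) ℝ) :
    TOp e F (eval · P)
      = fun x => F x fun k => eval x (iteratedPDeriv (List.finRange n) (e k) P) := by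
  funext x
  simp only [TOp, mderiv_eval]

theorem continuousOn_TOp_eval {n M : ℕ} {X : Set (Fin n → ℝ)} (e : Fin M → (Fin n → ℕ))
    {F : (Fin n → ℝ) → (Fin M → ℝ) → ℝ}
    (hF : ContinuousOn (fun q : (Fin n → ℝ) × (Fin M → ℝ) => F q.1 q.2) (X ×ˢ Set.univ))
    (P : MvPolynomial (Fin n) ℝ) : ContinuousOn (TOp e F (eval · P)) X := by
  rw [TOp_eval]
  exact hF.comp (continuousOn_id.prodMk (continuous_pi fun k => continuous_eval _).continuousOn)
    fun x hx => ⟨hx, mem_univ _⟩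

theorem exists_mem_Ioo_of_mem_interior {α : Type*} [LinearOrder α] [TopologicalSpace α]
    [OrderTopology α] [DenselyOrdered α] {s : Set α} {a y : α} (hy : y ∈ interior s)
    (ha : a < y) : ∃ c ∈ s, c ∈ Ioo a y :=
  haveI := nhdsLT_neBot_of_exists_lt ⟨a, ha⟩
  Filter.nonempty_of_mem (f := 𝓝[<] y)
    (inter_mem (mem_nhdsWithin_of_mem_nhds (mem_interior_iff_mem_nhds.mp hy)) (Ioo_mem_nhdsLT ha))

theorem polynomial_lower_approximation_general
    {n M : ℕ} (X : Set (Fin n → ℝ))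
    (e : Fin M → (Fin n → ℕ)) (he : Function.Injective e)
    (F : (Fin n → ℝ) → (Fin M → ℝ) → ℝ)
    (hF : ContinuousOn (fun q : (Fin n → ℝ) × (Fin M → ℝ) => F q.1 q.2) (X ×ˢ Set.univ))
    (f : (Fin n → ℝ) → ℝ) (hf : ContinuousOn f X)
    (hrc : ∀ x ∈ X, f x ∈ interior (Set.range (F x))) :
    ∀ x₀ ∈ X, ∀ ε > (0 : ℝ), ∃ δ > (0 : ℝ), ∃ P : MvPolynomial (Fin n) ℝ,
      ∀ x ∈ X, ‖x - x₀‖ ≤ δ →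
        f x - ε ≤ TOp e F (fun y => MvPolynomial.eval y P) x ∧
        TOp e F (fun y => MvPolynomial.eval y P) x ≤ f x := by
  intro x₀ hx₀ ε hε
  obtain ⟨_, ⟨ξ, rfl⟩, hξ⟩ := exists_mem_Ioo_of_mem_interior (hrc x₀ hx₀) (sub_lt_self _ hε)
  obtain ⟨P, hP⟩ :=
    exists_eval_iteratedPDeriv_eq (List.nodup_finRange n) List.mem_finRange he x₀ ξ
  have hT₀ : TOp e F (eval · P) x₀ = F x₀ ξ := by simp only [TOp_eval, hP]
  have hgap : ∀ᶠ x in 𝓝[X] x₀, TOp e F (eval · P) x - f x ∈ Ioo (-ε) 0 := by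
    refine ((continuousOn_TOp_eval e hF P).sub hf x₀ hx₀).eventually_mem (Ioo_mem_nhds ?_ ?_)
    all_goals rw [Pi.sub_apply, hT₀]; linarith [hξ.1, hξ.2]
  obtain ⟨δ, hδ, hball⟩ :=
    (nhdsWithin_hasBasis Metric.nhds_basis_closedBall X).eventually_iff.mp hgap
  refine ⟨δ, hδ, P, fun x hx hxδ => ?_⟩
  have hx' := hball ⟨by rwa [Metric.mem_closedBall, dist_eq_norm], hx⟩
  exact ⟨by linarith [hx'.1], by linarith [hx'.2]⟩

/-- **Lemma 1.** Let `X ⊆ ℝⁿ` be a nonempty open set, `F` jointly continuous and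
`f` continuous with `f(x) ∈ int R_x` for all `x ∈ X`, where `R_x = F({x} × ℝᴹ)`.
Then for every `x₀ ∈ X` and `ε > 0` there are `δ > 0` and a polynomial `P` such that
`f(x) − ε ≤ T(x,D)P(x) ≤ f(x)` whenever `x ∈ X` and `‖x − x₀‖ ≤ δ`. -/
theorem polynomial_lower_approximation
    {n m M : ℕ} (X : Set (Fin n → ℝ)) (hXopen : IsOpen X) (hXne : X.Nonempty)
    (e : Fin M → (Fin n → ℕ)) (he : Function.Injective e)
    (hrange : ∀ p : Fin n → ℕ, (∑ i, p i) ≤ m ↔ p ∈ Set.range e)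
    (F : (Fin n → ℝ) → (Fin M → ℝ) → ℝ)
    (hF : ContinuousOn (fun q : (Fin n → ℝ) × (Fin M → ℝ) => F q.1 q.2) (X ×ˢ Set.univ))
    (f : (Fin n → ℝ) → ℝ) (hf : ContinuousOn f X)
    (hrc : ∀ x ∈ X, f x ∈ interior (Set.range (F x))) :
    ∀ x₀ ∈ X, ∀ ε > (0 : ℝ), ∃ δ > (0 : ℝ), ∃ P : MvPolynomial (Fin n) ℝ,
      ∀ x ∈ X, ‖x - x₀‖ ≤ δ →
        f x - ε ≤ TOp e F (fun y => MvPolynomial.eval y P) x ∧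
        TOp e F (fun y => MvPolynomial.eval y P) x ≤ f x :=
  polynomial_lower_approximation_general X e he F hF f hf hrc
end

section
/- Let X ⊆ ℝ^n be a nonempty (possibly unbounded) open set, let F : X × ℝ^M → ℝ be jointly continuous, and let f : X → ℝ be continuous with f(x) ∈ int R_x for every x ∈ X. Then for every ε > 0 there exist a subset Γ_ε ⊂ X that is closed and nowhere dense in X, and a smooth function U_ε ∈ C^∞(X ∖ Γ_ε), such that f(x) − ε ≤ T(x,D)U_ε(x) ≤ f(x) for all x ∈ X ∖ Γ_ε. -/
open Set Topology Filter

/-!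
Near a point `x₀ ∈ X`, choose `ξ` with `f x₀ - ε < F(x₀, ξ) < f x₀` (possible because `f x₀` is
interior to `R_{x₀}`) and a polynomial `U` whose derivatives `D^p U(x₀)`, `|p| ≤ m`, are the
prescribed `ξ_p`; by continuity, `f - ε < T(x,D)U < f` on a neighbourhood of `x₀`. By Zorn's lemma
there is a maximal family of pairwise disjoint open subsets of `X` each carrying such a local
solution, and maximality forces its union to be dense in `X`. Gluing the local solutions gives
`U_ε`, and `Γ_ε` is the complement in `X` of the union.
-/

open Function
open scoped ContDiff

section PartialDerivatives

variable {n : ℕ}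

theorem ContDiff.pder (i : Fin n) {f : (Fin n → ℝ) → ℝ} (hf : ContDiff ℝ ∞ f) :
    ContDiff ℝ ∞ (pder i f) :=
  (hf.fderiv_right le_rfl).clm_apply contDiff_const

theorem Set.EqOn.pder {f g : (Fin n → ℝ) → ℝ} {V : Set (Fin n → ℝ)} (hV : IsOpen V)
    (h : EqOn f g V) (i : Fin n) : EqOn (pder i f) (pder i g) V := fun x hx => by
  simp only [_root_.pder, (h.eventuallyEq_of_mem (hV.mem_nhds hx)).fderiv_eq]

theorem Set.EqOn.mderiv {f g : (Fin n → ℝ) → ℝ} {V : Set (Fin n → ℝ)} (hV : IsOpen V)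
    (h : EqOn f g V) (p : Fin n → ℕ) : EqOn (mderiv p f) (mderiv p g) V := by
  unfold _root_.mderiv
  induction List.finRange n with
  | nil => exact h
  | cons i l ih =>
    simp only [List.foldr_cons]
    induction p i with
    | zero => exact ih
    | succ k ihk => simpa only [iterate_succ_apply'] using ihk.pder hV i

theorem pder_apply_eq_deriv_update (i : Fin n) {f : (Fin n → ℝ) → ℝ} {y : Fin n → ℝ}
    (hf : DifferentiableAt ℝ f y) :
    pder i f y = deriv (fun t => f (update y i t)) (y i) := by
  rw [← update_eq_self i y] at hf
  refine ((hf.hasFDerivAt.comp_hasDerivAt _ (hasDerivAt_update y i (y i))).deriv.trans ?_).symm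
  simp [_root_.pder]

/- `fderiv` is `0` at points of non-differentiability, so `pder i` is additive only on
differentiable functions; `D^p` is therefore made linear on the submodule of smooth functions. -/
variable (n) in
noncomputable def smoothFunctions : Submodule ℝ ((Fin n → ℝ) → ℝ) where
  carrier := {f | ContDiff ℝ ∞ f}
  add_mem' {f g} (hf : ContDiff ℝ ∞ f) (hg : ContDiff ℝ ∞ g) := hf.add hg
  zero_mem' := (contDiff_const : ContDiff ℝ ∞ fun _ => (0 : ℝ))
  smul_mem' c f (hf : ContDiff ℝ ∞ f) := hf.const_smul c

theorem mem_smoothFunctions {f : (Fin n → ℝ) → ℝ} : f ∈ smoothFunctions n ↔ ContDiff ℝ ∞ f :=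
  .rfl

noncomputable def pderLinear (i : Fin n) : smoothFunctions n →ₗ[ℝ] smoothFunctions n where
  toFun f := ⟨pder i f, mem_smoothFunctions.2 ((mem_smoothFunctions.1 f.2).pder i)⟩
  map_add' f g := by
    ext x
    have hdiff (u : smoothFunctions n) := (mem_smoothFunctions.1 u.2).differentiable (by simp) x
    exact congrArg (· (Pi.single i 1)) (fderiv_add (hdiff f) (hdiff g))
  map_smul' c f := by
    ext x
    have hdiff := (mem_smoothFunctions.1 f.2).differentiable (by simp) x
    exact congrArg (· (Pi.single i 1)) (fderiv_const_smul hdiff c)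

noncomputable def mderivLinear (p : Fin n → ℕ) : smoothFunctions n →ₗ[ℝ] smoothFunctions n :=
  (List.finRange n).foldr (fun i L => pderLinear i ^ p i * L) 1

theorem coe_mderivLinear (p : Fin n → ℕ) (f : smoothFunctions n) :
    (mderivLinear p f : (Fin n → ℝ) → ℝ) = mderiv p f := by
  unfold mderivLinear _root_.mderiv
  induction List.finRange n with
  | nil => rfl
  | cons i l ih =>
    simp only [List.foldr_cons, Module.End.mul_apply, Module.End.pow_apply, ← ih]
    exact Semiconj.iterate_right (f := Subtype.val) (fun _ => rfl) (p i) _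

theorem ContDiff.mderiv (p : Fin n → ℕ) {f : (Fin n → ℝ) → ℝ} (hf : ContDiff ℝ ∞ f) :
    ContDiff ℝ ∞ (mderiv p f) := by
  have h := (mderivLinear p ⟨f, mem_smoothFunctions.2 hf⟩).2
  rwa [mem_smoothFunctions, coe_mderivLinear] at h

end PartialDerivatives

section Monomials

variable {n : ℕ}

theorem prod_update_apply_update {M : Type*} [CommMonoid M] (φ : Fin n → ℝ → M) (i : Fin n)
    (ψ : ℝ → M) (y : Fin n → ℝ) (t : ℝ) :
    ∏ j, update φ i ψ j (update y i t j) = ψ t * ∏ j ∈ Finset.univ.erase i, φ j (y j) := by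
  rw [← Finset.mul_prod_erase _ _ (Finset.mem_univ i), update_self, update_self]
  congr 1
  refine Finset.prod_congr rfl fun j hj => ?_
  rw [update_of_ne (Finset.ne_of_mem_erase hj), update_of_ne (Finset.ne_of_mem_erase hj)]

theorem pder_prod (i : Fin n) {φ : Fin n → ℝ → ℝ} (hφ : ∀ j, Differentiable ℝ (φ j)) :
    pder i (fun y => ∏ j, φ j (y j)) = fun y => ∏ j, update φ i (deriv (φ i)) j (y j) := by
  funext y
  have hslice : (fun t => ∏ j, φ j (update y i t j))
      = fun t => φ i t * ∏ j ∈ Finset.univ.erase i, φ j (y j) :=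
    funext fun t => by simpa using prod_update_apply_update φ i (φ i) y t
  rw [pder_apply_eq_deriv_update i (by fun_prop), hslice, deriv_mul_const (hφ i (y i))]
  simpa using (prod_update_apply_update φ i (deriv (φ i)) y (y i)).symm

theorem iterate_pder_prod (i : Fin n) (k : ℕ) {φ : Fin n → ℝ → ℝ}
    (hφ : ∀ j, ContDiff ℝ ∞ (φ j)) :
    (pder i)^[k] (fun y => ∏ j, φ j (y j))
      = fun y => ∏ j, update φ i (deriv^[k] (φ i)) j (y j) := by
  induction k with
  | zero => simp
  | succ k ih =>
    have hdiff : ∀ j, Differentiable ℝ (update φ i (deriv^[k] (φ i)) j) := by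
      intro j
      rcases eq_or_ne j i with rfl | hj
      · simpa using ((hφ j).iterate_deriv k).differentiable (by simp)
      · simpa [hj] using (hφ j).differentiable (by simp)
    rw [iterate_succ_apply', ih, pder_prod i hdiff, update_idem, update_self, iterate_succ_apply']

theorem mderiv_prod (p : Fin n → ℕ) {φ : Fin n → ℝ → ℝ} (hφ : ∀ j, ContDiff ℝ ∞ (φ j)) :
    mderiv p (fun y => ∏ j, φ j (y j)) = fun y => ∏ j, iteratedDeriv (p j) (φ j) (y j) := by
  suffices ∀ l : List (Fin n), l.Nodup →
      l.foldr (fun i g => (pder i)^[p i] g) (fun y => ∏ j, φ j (y j))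
        = fun y => ∏ j, (if j ∈ l then deriv^[p j] (φ j) else φ j) (y j) by
    simpa [mderiv, iteratedDeriv_eq_iterate] using this _ (List.nodup_finRange n)
  intro l hl
  induction l with
  | nil => simp
  | cons b t ih =>
    obtain ⟨hb, ht⟩ := List.nodup_cons.mp hl
    have hsmooth : ∀ j, ContDiff ℝ ∞ (if j ∈ t then deriv^[p j] (φ j) else φ j) := by
      intro j
      split_ifs
      exacts [(hφ j).iterate_deriv _, hφ j]
    rw [List.foldr_cons, ih ht, iterate_pder_prod b _ hsmooth, if_neg hb]
    congr! 3 with y j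
    rcases eq_or_ne j b with rfl | hj
    · simp
    · simp [hj]

theorem iteratedDeriv_sub_pow_apply_self {𝕜 : Type*} [NontriviallyNormedField 𝕜] (k q : ℕ)
    (c : 𝕜) :
    iteratedDeriv k (fun t => (t - c) ^ q) c = if k = q then (q.factorial : 𝕜) else 0 := by
  simp only [iteratedDeriv_comp_sub_const (f := (· ^ q)), sub_self, iteratedDeriv_fun_pow_zero,
    Nat.cast_ite, Nat.cast_zero]

theorem mderiv_monomial_apply_self (p q : Fin n → ℕ) (c : Fin n → ℝ) :
    mderiv p (fun y => ∏ j, (y j - c j) ^ q j) c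
      = if p = q then ∏ j, ((q j).factorial : ℝ) else 0 := by
  rw [mderiv_prod p (φ := fun j t => (t - c j) ^ q j) (fun j => by fun_prop)]
  simp [iteratedDeriv_sub_pow_apply_self, Finset.prod_ite_zero, funext_iff]

end Monomials

theorem exists_contDiff_mderiv_apply_eq {n M : ℕ} (e : Fin M → Fin n → ℕ) (he : Injective e)
    (ξ : Fin M → ℝ) (c : Fin n → ℝ) :
    ∃ U : (Fin n → ℝ) → ℝ, ContDiff ℝ ∞ U ∧ ∀ k, mderiv (e k) U c = ξ k := by
  let monomial (l : Fin M) : smoothFunctions n :=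
    ⟨fun y => ∏ j, (y j - c j) ^ e l j, mem_smoothFunctions.2 (by fun_prop)⟩
  let U : smoothFunctions n := ∑ l, (ξ l / ∏ j, ((e l j).factorial : ℝ)) • monomial l
  refine ⟨U, mem_smoothFunctions.1 U.2, fun k => ?_⟩
  have hfact : ∏ j, ((e k j).factorial : ℝ) ≠ 0 :=
    Finset.prod_ne_zero_iff.2 fun j _ => Nat.cast_ne_zero.2 (Nat.factorial_ne_zero _)
  rw [← coe_mderivLinear, map_sum]
  simp only [map_smul, Submodule.coe_sum, Submodule.coe_smul, Finset.sum_apply, Pi.smul_apply,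
    smul_eq_mul, coe_mderivLinear, monomial, mderiv_monomial_apply_self, he.eq_iff]
  simp [hfact]

theorem Set.EqOn.TOp {n M : ℕ} (e : Fin M → Fin n → ℕ) (F : (Fin n → ℝ) → (Fin M → ℝ) → ℝ)
    {U U' : (Fin n → ℝ) → ℝ} {V : Set (Fin n → ℝ)} (hV : IsOpen V) (h : EqOn U U' V) :
    EqOn (TOp e F U) (TOp e F U') V := fun x hx => by
  simp only [_root_.TOp, fun k => h.mderiv hV (e k) hx]

theorem exists_contDiff_eventually_TOp_mem_Ioo {n M : ℕ} (e : Fin M → Fin n → ℕ)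
    (he : Injective e) (F : (Fin n → ℝ) → (Fin M → ℝ) → ℝ) (f : (Fin n → ℝ) → ℝ)
    {x₀ : Fin n → ℝ}
    (hF : ∀ ξ, ContinuousAt (fun q : (Fin n → ℝ) × (Fin M → ℝ) => F q.1 q.2) (x₀, ξ))
    (hf : ContinuousAt f x₀) (hx₀ : f x₀ ∈ interior (range (F x₀))) {ε : ℝ} (hε : 0 < ε) :
    ∃ U : (Fin n → ℝ) → ℝ, ContDiff ℝ ∞ U ∧
      ∀ᶠ x in 𝓝 x₀, TOp e F U x ∈ Ioo (f x - ε) (f x) := by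
  obtain ⟨_, ⟨ξ, rfl⟩, hξ⟩ : ∃ y ∈ range (F x₀), y ∈ Ioo (f x₀ - ε) (f x₀) :=
    ((Eventually.filter_mono nhdsWithin_le_nhds (mem_interior_iff_mem_nhds.1 hx₀)).and
      (Ioo_mem_nhdsLT (by linarith))).exists
  obtain ⟨U, hU, hUξ⟩ := exists_contDiff_mderiv_apply_eq e he ξ x₀
  have hjet : ContinuousAt (fun x => (x, fun k => mderiv (e k) U x)) x₀ :=
    continuousAt_id.prodMk (continuous_pi fun k => (hU.mderiv (e k)).continuous).continuousAt
  have hT : ContinuousAt (TOp e F U) x₀ := (hF ξ).comp_of_eq hjet (by simp [hUξ])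
  have hTx₀ : TOp e F U x₀ = F x₀ ξ := by simp [_root_.TOp, hUξ]
  have hlower : ∀ᶠ x in 𝓝 x₀, f x - ε < TOp e F U x :=
    (hf.sub continuousAt_const).eventually_lt hT (by simpa [hTx₀] using hξ.1)
  exact ⟨U, hU, hlower.and (hT.eventually_lt hf (hTx₀ ▸ hξ.2))⟩

theorem exists_pairwiseDisjoint_isOpen_subset_closure_sUnion {α : Type*} [TopologicalSpace α]
    {s : Set α} (hs : IsOpen s) (P : Set α → Prop) (hP : ∀ x ∈ s, ∃ V ∈ 𝓝 x, P V)
    (hPmono : ∀ ⦃V W⦄, W ⊆ V → P V → P W) :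
    ∃ 𝒜 : Set (Set α), (∀ V ∈ 𝒜, IsOpen V ∧ V ⊆ s ∧ P V) ∧ 𝒜.PairwiseDisjoint id ∧
      s ⊆ closure (⋃₀ 𝒜) := by
  let S : Set (Set (Set α)) :=
    {𝒜 | (∀ V ∈ 𝒜, IsOpen V ∧ V ⊆ s ∧ P V) ∧ 𝒜.PairwiseDisjoint id}
  obtain ⟨𝒜, h𝒜⟩ := zorn_subset S fun c hcS hc =>
    ⟨⋃₀ c, ⟨fun V ⟨_, h𝒜c, hV⟩ => (hcS h𝒜c).1 V hV,
      (hc.pairwiseDisjoint_sUnion id).2 fun _ h𝒜c => (hcS h𝒜c).2⟩,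
      fun _ => subset_sUnion_of_mem⟩
  refine ⟨𝒜, h𝒜.prop.1, h𝒜.prop.2, fun x hx => by_contra fun hxO => ?_⟩
  obtain ⟨V, hV, hPV⟩ := hP x hx
  let W := interior V ∩ s ∩ (closure (⋃₀ 𝒜))ᶜ
  have hWS : insert W 𝒜 ∈ S := by
    have hW : IsOpen W ∧ W ⊆ s ∧ P W :=
      ⟨(isOpen_interior.inter hs).inter isClosed_closure.isOpen_compl, fun y hy => hy.1.2,
        hPmono (fun y hy => interior_subset hy.1.1) hPV⟩
    refine ⟨forall_mem_insert.2 ⟨hW, h𝒜.prop.1⟩, h𝒜.prop.2.insert fun V' hV' _ => ?_⟩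
    exact disjoint_left.2 fun y hyW hyV' => hyW.2 (subset_closure ⟨V', hV', hyV'⟩)
  have hW𝒜 : W ∈ 𝒜 := h𝒜.2 hWS (subset_insert _ _) (mem_insert _ _)
  exact hxO (subset_closure ⟨W, hW𝒜, ⟨mem_interior_iff_mem_nhds.2 hV, hx⟩, hxO⟩)

theorem Set.PairwiseDisjoint.exists_eqOn {α β : Type*} [Nonempty β] {𝒜 : Set (Set α)}
    (h𝒜 : 𝒜.PairwiseDisjoint id) (g : Set α → α → β) :
    ∃ G : α → β, ∀ V ∈ 𝒜, EqOn G (g V) V := by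
  classical
  refine ⟨fun x => if h : ∃ V ∈ 𝒜, x ∈ V then g h.choose x else Classical.arbitrary β,
    fun V hV x hx => ?_⟩
  have h : ∃ V ∈ 𝒜, x ∈ V := ⟨V, hV, hx⟩
  simp only [dif_pos h, h𝒜.elim_set h.choose_spec.1 hV x h.choose_spec.2 hx]

theorem isClosed_isNowhereDense_preimage_diff {α : Type*} [TopologicalSpace α] {X O : Set α}
    (hX : IsOpen X) (hO : IsOpen O) (hXO : X ⊆ closure O) :
    IsClosed ((↑) ⁻¹' (X \ O) : Set X) ∧ IsNowhereDense ((↑) ⁻¹' (X \ O) : Set X) := by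
  have hcompl : ((↑) ⁻¹' (X \ O) : Set X)ᶜ = (↑) ⁻¹' O := by
    ext x
    simp
  rw [isClosed_isNowhereDense_iff_compl, hcompl, Subtype.dense_iff, Subtype.image_preimage_coe]
  exact ⟨hO.preimage continuous_subtype_val, fun x hx => hX.inter_closure ⟨hx, hXO hx⟩⟩

theorem approximate_solution_off_closed_nowhere_dense_general
    {n M : ℕ} (X : Set (Fin n → ℝ)) (hXopen : IsOpen X)
    (e : Fin M → (Fin n → ℕ)) (he : Function.Injective e)
    (F : (Fin n → ℝ) → (Fin M → ℝ) → ℝ)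
    (hF : ContinuousOn (fun q : (Fin n → ℝ) × (Fin M → ℝ) => F q.1 q.2) (X ×ˢ Set.univ))
    (f : (Fin n → ℝ) → ℝ) (hf : ContinuousOn f X)
    (hrc : ∀ x ∈ X, f x ∈ interior (Set.range (F x))) :
    ∀ ε > (0 : ℝ), ∃ Γ : Set (Fin n → ℝ), Γ ⊆ X ∧
      IsClosed (Subtype.val ⁻¹' Γ : Set X) ∧
      IsNowhereDense (Subtype.val ⁻¹' Γ : Set X) ∧
      ∃ U : (Fin n → ℝ) → ℝ, ContDiffOn ℝ (⊤ : ℕ∞) U (X \ Γ) ∧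
        ∀ x ∈ X \ Γ, f x - ε ≤ TOp e F U x ∧ TOp e F U x ≤ f x := by
  intro ε hε
  have hlocal (x : Fin n → ℝ) (hx : x ∈ X) : ∃ V ∈ 𝓝 x, ∃ U : (Fin n → ℝ) → ℝ,
      ContDiff ℝ ∞ U ∧ ∀ y ∈ V, f y - ε ≤ TOp e F U y ∧ TOp e F U y ≤ f y := by
    obtain ⟨U, hU, hTU⟩ := exists_contDiff_eventually_TOp_mem_Ioo e he F f
      (fun _ => hF.continuousAt ((hXopen.prod isOpen_univ).mem_nhds ⟨hx, trivial⟩))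
      (hf.continuousAt (hXopen.mem_nhds hx)) (hrc x hx) hε
    exact ⟨_, hTU, U, hU, fun y hy => ⟨hy.1.le, hy.2.le⟩⟩
  obtain ⟨𝒜, h𝒜, hdisj, hdense⟩ := exists_pairwiseDisjoint_isOpen_subset_closure_sUnion hXopen _
    hlocal fun V W hWV ⟨U, hU, hTU⟩ => ⟨U, hU, fun y hy => hTU y (hWV hy)⟩
  choose! g hg hgT using fun V hV => (h𝒜 V hV).2.2
  obtain ⟨G, hG⟩ := hdisj.exists_eqOn g
  obtain ⟨hclosed, hnd⟩ := isClosed_isNowhereDense_preimage_diff hXopen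
    (isOpen_sUnion fun V hV => (h𝒜 V hV).1) hdense
  refine ⟨X \ ⋃₀ 𝒜, sdiff_subset, hclosed, hnd, G, ?_⟩
  rw [sdiff_sdiff_right_self]
  refine ⟨fun x ⟨_, V, hV, hxV⟩ => ?_, fun x ⟨_, V, hV, hxV⟩ => ?_⟩
  · exact (((hg V hV).contDiffOn.congr (hG V hV)).contDiffAt
      ((h𝒜 V hV).1.mem_nhds hxV)).contDiffWithinAt
  · rw [(hG V hV).TOp e F (h𝒜 V hV).1 hxV]
    exact hgT V hV x hxV

/-- **Proposition 1.** Let `X ⊆ ℝⁿ` be a nonempty open set, `F` jointly continuous and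
`f` continuous with `f(x) ∈ int R_x` for all `x ∈ X`. Then for every `ε > 0` there exist
`Γ_ε ⊆ X`, closed and nowhere dense in (the subspace topology of) `X`, and
`U_ε ∈ C^∞(X \ Γ_ε)` such that `f − ε ≤ T(x,D)U_ε ≤ f` on `X \ Γ_ε`. -/
theorem approximate_solution_off_closed_nowhere_dense
    {n m M : ℕ} (X : Set (Fin n → ℝ)) (hXopen : IsOpen X) (hXne : X.Nonempty)
    (e : Fin M → (Fin n → ℕ)) (he : Function.Injective e)
    (hrange : ∀ p : Fin n → ℕ, (∑ i, p i) ≤ m ↔ p ∈ Set.range e)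
    (F : (Fin n → ℝ) → (Fin M → ℝ) → ℝ)
    (hF : ContinuousOn (fun q : (Fin n → ℝ) × (Fin M → ℝ) => F q.1 q.2) (X ×ˢ Set.univ))
    (f : (Fin n → ℝ) → ℝ) (hf : ContinuousOn f X)
    (hrc : ∀ x ∈ X, f x ∈ interior (Set.range (F x))) :
    ∀ ε > (0 : ℝ), ∃ Γ : Set (Fin n → ℝ), Γ ⊆ X ∧
      IsClosed (Subtype.val ⁻¹' Γ : Set X) ∧
      IsNowhereDense (Subtype.val ⁻¹' Γ : Set X) ∧
      ∃ U : (Fin n → ℝ) → ℝ, ContDiffOn ℝ (⊤ : ℕ∞) U (X \ Γ) ∧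
        ∀ x ∈ X \ Γ, f x - ε ≤ TOp e F U x ∧ TOp e F U x ≤ f x :=
  approximate_solution_off_closed_nowhere_dense_general X hXopen e he F hF f hf hrc
end

section
/- Let X ⊆ ℝ^n be a nonempty open set, let Σ ⊆ X be any subset, let M ∈ ℕ, and let F : X × ℝ^M → ℝ be jointly smooth. For i = 1, …, M let (s_{i,ν})_{ν ∈ ℕ} and (s′_{i,ν})_{ν ∈ ℕ} be sequences of smooth functions X → ℝ such that each difference sequence (s_{i,ν} − s′_{i,ν})_{ν ∈ ℕ} belongs to J_Σ(X). Then the sequence of smooth functions t_ν(x) = F(x, s_{1,ν}(x), …, s_{M,ν}(x)) − F(x, s′_{1,ν}(x), …, s′_{M,ν}(x)) belongs to J_Σ(X). (Hence the nonlinear map F acts well-definedly on the quotient algebra B_Σ(X) = (C^∞(X))^ℕ / J_Σ(X).) -/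
/-!
By the chain rule, `∂ⱼ (F(y, g(y))) = Fⱼ(y, g(y), ∂ⱼ g(y))` with `Fⱼ(y, v, w) = DF(y, v)(eⱼ, w)`,
and `Fⱼ` is again smooth. Hence `∂ⱼ` of a difference `F(·, g) - F(·, h)` is a difference of the
same shape, with the inner functions `g, h` augmented by their `j`-th partials. An induction on
`l`, over all finite index sets of inner functions at once, shows that if every `gᵢ - hᵢ` has
all partial derivatives of order `≤ l` vanishing at `x`, so does `F(·, g) - F(·, h)`. Symmetry of
second derivatives lets us differentiate in any order, which matches this with the multi-index
derivatives `D^p`; for the sequences, take `ν` to be the largest of the `M` indices supplied by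
the hypotheses at `x` and `l`.
-/

open Set Topology Filter

/-- Membership in the ideal `J_Σ(X)`: a sequence of smooth functions on `X` whose
derivatives asymptotically vanish (in the finite-type sense) at every point of `X \ Σ`. -/
def memJ {n : ℕ} (X Sg : Set (Fin n → ℝ)) (w : ℕ → (Fin n → ℝ) → ℝ) : Prop :=
  (∀ ν : ℕ, ContDiffOn ℝ (⊤ : ℕ∞) (w ν) X) ∧
  ∀ x ∈ X \ Sg, ∀ l : ℕ, ∃ ν : ℕ, ∀ μ ≥ ν, ∀ p : Fin n → ℕ,
    (∑ i, p i) ≤ l → mderiv p (w μ) x = 0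

open scoped ContDiff

section PartialDerivatives

variable {n : ℕ} {U : Set (Fin n → ℝ)}

noncomputable def pderList (L : List (Fin n)) (f : (Fin n → ℝ) → ℝ) : (Fin n → ℝ) → ℝ :=
  L.foldr pder f

theorem pderList_append (L₁ L₂ : List (Fin n)) (f : (Fin n → ℝ) → ℝ) :
    pderList (L₁ ++ L₂) f = pderList L₁ (pderList L₂ f) :=
  List.foldr_append ..

theorem pderList_singleton (i : Fin n) (f : (Fin n → ℝ) → ℝ) : pderList [i] f = pder i f := rfl

theorem pder_congr (hU : IsOpen U) (h : EqOn f g U) (i : Fin n) :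
    EqOn (pder i f) (pder i g) U := fun x hx => by
  simp only [pder, (eventuallyEq_of_mem (hU.mem_nhds hx) h).fderiv_eq]

theorem pderList_congr (hU : IsOpen U) (h : EqOn f g U)
    (L : List (Fin n)) : EqOn (pderList L f) (pderList L g) U := by
  induction L with
  | nil => exact h
  | cons i L ih => exact pder_congr hU ih i

theorem contDiffOn_pder (hU : IsOpen U) (hf : ContDiffOn ℝ ∞ f U)
    (i : Fin n) : ContDiffOn ℝ ∞ (pder i f) U :=
  (hf.fderiv_of_isOpen hU (by exact_mod_cast le_top)).clm_apply contDiffOn_const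

theorem contDiffOn_pderList (hU : IsOpen U) (hf : ContDiffOn ℝ ∞ f U)
    (L : List (Fin n)) : ContDiffOn ℝ ∞ (pderList L f) U := by
  induction L with
  | nil => exact hf
  | cons i L ih => exact contDiffOn_pder hU ih i

theorem pder_sub (hU : IsOpen U) (hf : ContDiffOn ℝ ∞ f U)
    (hg : ContDiffOn ℝ ∞ g U) (i : Fin n) :
    EqOn (pder i (fun y => f y - g y)) (fun y => pder i f y - pder i g y) U := fun y hy => by
  have hd : ∀ {φ : (Fin n → ℝ) → ℝ}, ContDiffOn ℝ ∞ φ U → DifferentiableAt ℝ φ y := fun hφ =>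
    (hφ.contDiffAt (hU.mem_nhds hy)).differentiableAt (by simp)
  simp only [pder, fderiv_fun_sub (hd hf) (hd hg), sub_apply]

theorem pder_pder_comm (hU : IsOpen U) (hf : ContDiffOn ℝ ∞ f U)
    (i k : Fin n) : EqOn (pder i (pder k f)) (pder k (pder i f)) U := fun x hx => by
  have hfx : ContDiffAt ℝ ∞ f x := hf.contDiffAt (hU.mem_nhds hx)
  have hdf : DifferentiableAt ℝ (fderiv ℝ f) x :=
    (hfx.fderiv_right (m := (1 : ℕ∞)) (by exact_mod_cast le_top)).differentiableAt (by simp)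
  have second : ∀ a b : Fin n, pder a (pder b f) x
      = fderiv ℝ (fderiv ℝ f) x (Pi.single a 1) (Pi.single b 1) := fun a b => by
    change fderiv ℝ (fun z => fderiv ℝ f z (Pi.single b 1)) x (Pi.single a 1) = _
    simp [fderiv_clm_apply hdf (differentiableAt_const _)]
  rw [second, second]
  have h2 : minSmoothness ℝ 2 ≤ ∞ := by
    simpa [minSmoothness_of_isRCLikeNormedField] using WithTop.coe_le_coe.2 (le_top : (2 : ℕ∞) ≤ ⊤)
  exact hfx.isSymmSndFDerivAt h2 _ _

theorem pderList_perm (hU : IsOpen U) (hf : ContDiffOn ℝ ∞ f U)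
    {L L' : List (Fin n)} (h : L.Perm L') : EqOn (pderList L f) (pderList L' f) U := by
  induction h with
  | nil => exact fun _ _ => rfl
  | cons a _ ih => exact pder_congr hU ih a
  | swap a b L => exact pder_pder_comm hU (contDiffOn_pderList hU hf L) b a
  | trans _ _ ih₁ ih₂ => exact fun x hx => (ih₁ hx).trans (ih₂ hx)

def multiIndexList (p : Fin n → ℕ) : List (Fin n) :=
  (List.finRange n).flatMap fun i => List.replicate (p i) i

theorem pderList_replicate (k : ℕ) (i : Fin n) (f : (Fin n → ℝ) → ℝ) :
    pderList (List.replicate k i) f = (pder i)^[k] f := by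
  induction k with
  | zero => rfl
  | succ k ih =>
    rw [List.replicate_succ, Function.iterate_succ_apply', ← ih]
    rfl

theorem mderiv_eq_pderList (p : Fin n → ℕ) (f : (Fin n → ℝ) → ℝ) :
    mderiv p f = pderList (multiIndexList p) f := by
  unfold mderiv multiIndexList
  induction List.finRange n with
  | nil => rfl
  | cons i K ih =>
    rw [List.foldr_cons, List.flatMap_cons, pderList_append, ← ih, pderList_replicate]

theorem length_multiIndexList (p : Fin n → ℕ) : (multiIndexList p).length = ∑ i, p i := by
  simp [multiIndexList, List.length_flatMap, Fin.sum_univ_def]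

theorem count_multiIndexList (p : Fin n → ℕ) (j : Fin n) : (multiIndexList p).count j = p j := by
  simp [multiIndexList, List.count_flatMap, Function.comp_def, List.count_replicate,
    ← Fin.sum_univ_def]

theorem multiIndexList_count_perm (L : List (Fin n)) :
    (multiIndexList fun i => L.count i).Perm L :=
  List.perm_iff_count.2 fun j => count_multiIndexList _ j

end PartialDerivatives

section VanishingOrder

variable {n : ℕ} {U : Set (Fin n → ℝ)} {l : ℕ} {f g : (Fin n → ℝ) → ℝ} {x : Fin n → ℝ}

/-- Derivatives are taken along words of indices rather than multi-indices, so that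
`vanishesToOrder_succ_iff` can peel off the innermost derivative. -/
def VanishesToOrder (l : ℕ) (f : (Fin n → ℝ) → ℝ) (x : Fin n → ℝ) : Prop :=
  ∀ L : List (Fin n), L.length ≤ l → pderList L f x = 0

theorem vanishesToOrder_zero_iff : VanishesToOrder 0 f x ↔ f x = 0 :=
  ⟨fun h => h [] le_rfl, fun h L hL => by rwa [List.eq_nil_of_length_eq_zero (Nat.le_zero.1 hL)]⟩

theorem vanishesToOrder_succ_iff :
    VanishesToOrder (l + 1) f x ↔ f x = 0 ∧ ∀ j, VanishesToOrder l (pder j f) x := by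
  refine ⟨fun h => ⟨h [] (Nat.zero_le _), fun j L hL => ?_⟩, fun ⟨h₀, h⟩ L hL => ?_⟩
  · simpa [pderList_append, pderList_singleton] using h (L ++ [j]) (by simpa using hL)
  · rcases List.eq_nil_or_concat' L with rfl | ⟨L', j, rfl⟩
    · exact h₀
    · simpa [pderList_append, pderList_singleton] using h j L' (by simpa using hL)

theorem VanishesToOrder.mono {l' : ℕ} (h : VanishesToOrder l f x) (hl : l' ≤ l) :
    VanishesToOrder l' f x :=
  fun L hL => h L (hL.trans hl)

theorem VanishesToOrder.congr (hU : IsOpen U) (hx : x ∈ U) (hfg : EqOn f g U)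
    (h : VanishesToOrder l f x) : VanishesToOrder l g x :=
  fun L hL => (pderList_congr hU hfg L hx).symm.trans (h L hL)

theorem vanishesToOrder_iff_mderiv (hU : IsOpen U) (hf : ContDiffOn ℝ ∞ f U) (hx : x ∈ U) :
    VanishesToOrder l f x ↔ ∀ p : Fin n → ℕ, (∑ i, p i) ≤ l → mderiv p f x = 0 := by
  refine ⟨fun h p hp => ?_, fun h L hL => ?_⟩
  · rw [mderiv_eq_pderList]
    exact h _ (by rwa [length_multiIndexList])
  · have hperm := multiIndexList_count_perm L
    rw [← pderList_perm hU hf hperm hx, ← mderiv_eq_pderList]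
    exact h _ (by rwa [← length_multiIndexList, hperm.length_eq])

end VanishingOrder

section ChainRule

variable {n : ℕ} {ι : Type*} {X : Set (Fin n → ℝ)} {g : ι → (Fin n → ℝ) → ℝ}

noncomputable def withPder (g : ι → (Fin n → ℝ) → ℝ) (j : Fin n) : ι ⊕ ι → (Fin n → ℝ) → ℝ :=
  Sum.elim g fun i => pder j (g i)

theorem contDiffOn_withPder (hX : IsOpen X) (hg : ∀ i, ContDiffOn ℝ ∞ (g i) X) (j : Fin n) :
    ∀ k, ContDiffOn ℝ ∞ (withPder g j k) X
  | .inl i => hg i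
  | .inr i => contDiffOn_pder hX (hg i) j

variable [Fintype ι] {F : (Fin n → ℝ) → (ι → ℝ) → ℝ}

noncomputable def chainPder (F : (Fin n → ℝ) → (ι → ℝ) → ℝ) (j : Fin n) :
    (Fin n → ℝ) → (ι ⊕ ι → ℝ) → ℝ :=
  fun y v => fderiv ℝ (fun q : (Fin n → ℝ) × (ι → ℝ) => F q.1 q.2) (y, v ∘ Sum.inl)
    (Pi.single j 1, v ∘ Sum.inr)

theorem contDiffOn_comp_graph
    (hF : ContDiffOn ℝ ∞ (fun q : (Fin n → ℝ) × (ι → ℝ) => F q.1 q.2) (X ×ˢ univ))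
    (hg : ∀ i, ContDiffOn ℝ ∞ (g i) X) : ContDiffOn ℝ ∞ (fun y => F y fun i => g i y) X :=
  hF.comp (contDiffOn_id.prodMk (contDiffOn_pi.2 hg)) fun _ hy => ⟨hy, mem_univ _⟩

theorem pder_comp_graph (hX : IsOpen X)
    (hF : ContDiffOn ℝ ∞ (fun q : (Fin n → ℝ) × (ι → ℝ) => F q.1 q.2) (X ×ˢ univ))
    (hg : ∀ i, ContDiffOn ℝ ∞ (g i) X) (j : Fin n) :
    EqOn (pder j fun y => F y fun i => g i y) (fun y => chainPder F j y fun k => withPder g j k y)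
      X := fun y hy => by
  have hgy : HasFDerivAt (fun z => ((z, fun i => g i z) : (Fin n → ℝ) × (ι → ℝ)))
      ((ContinuousLinearMap.id ℝ _).prod (ContinuousLinearMap.pi fun i => fderiv ℝ (g i) y)) y :=
    (hasFDerivAt_id y).prodMk <| hasFDerivAt_pi.2 fun i =>
      (((hg i).contDiffAt (hX.mem_nhds hy)).differentiableAt (by simp)).hasFDerivAt
  have hFy : DifferentiableAt ℝ (fun q : (Fin n → ℝ) × (ι → ℝ) => F q.1 q.2) (y, fun i => g i y) :=
    (hF.contDiffAt ((hX.prod isOpen_univ).mem_nhds ⟨hy, mem_univ _⟩)).differentiableAt (by simp)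
  change fderiv ℝ ((fun q : (Fin n → ℝ) × (ι → ℝ) => F q.1 q.2) ∘ fun z => (z, fun i => g i z)) y
    (Pi.single j 1) = _
  rw [(hFy.hasFDerivAt.comp y hgy).fderiv]
  simp [chainPder, withPder, pder, Function.comp_def]

theorem contDiffOn_chainPder (hX : IsOpen X)
    (hF : ContDiffOn ℝ ∞ (fun q : (Fin n → ℝ) × (ι → ℝ) => F q.1 q.2) (X ×ˢ univ)) (j : Fin n) :
    ContDiffOn ℝ ∞ (fun q : (Fin n → ℝ) × (ι ⊕ ι → ℝ) => chainPder F j q.1 q.2) (X ×ˢ univ) := by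
  have hDF := hF.fderiv_of_isOpen (hX.prod isOpen_univ) (m := ∞) (by simp)
  have hbase : ContDiff ℝ ∞ fun q : (Fin n → ℝ) × (ι ⊕ ι → ℝ) => (q.1, q.2 ∘ Sum.inl) := by
    fun_prop
  have hdir : ContDiff ℝ ∞ fun q : (Fin n → ℝ) × (ι ⊕ ι → ℝ) =>
      ((Pi.single j 1 : Fin n → ℝ), q.2 ∘ Sum.inr) := by
    fun_prop
  exact (hDF.comp hbase.contDiffOn fun q hq => ⟨hq.1, mem_univ _⟩).clm_apply hdir.contDiffOn

end ChainRule

theorem vanishesToOrder_comp_sub_comp {n : ℕ} {X : Set (Fin n → ℝ)} (hX : IsOpen X)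
    {x : Fin n → ℝ} (hx : x ∈ X) (l : ℕ) {ι : Type*} [Fintype ι]
    {F : (Fin n → ℝ) → (ι → ℝ) → ℝ}
    (hF : ContDiffOn ℝ ∞ (fun q : (Fin n → ℝ) × (ι → ℝ) => F q.1 q.2) (X ×ˢ univ))
    {g h : ι → (Fin n → ℝ) → ℝ} (hg : ∀ i, ContDiffOn ℝ ∞ (g i) X)
    (hh : ∀ i, ContDiffOn ℝ ∞ (h i) X)
    (hgh : ∀ i, VanishesToOrder l (fun y => g i y - h i y) x) :
    VanishesToOrder l (fun y => F y (fun i => g i y) - F y (fun i => h i y)) x := by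
  induction l generalizing ι with
  | zero =>
    refine vanishesToOrder_zero_iff.2 ?_
    simp only [funext fun i => sub_eq_zero.1 (vanishesToOrder_zero_iff.1 (hgh i)), sub_self]
  | succ l ih =>
    have hgh' := fun i => vanishesToOrder_succ_iff.1 (hgh i)
    refine vanishesToOrder_succ_iff.2 ⟨?_, fun j => ?_⟩
    · simp only [funext fun i => sub_eq_zero.1 (hgh' i).1, sub_self]
    have hderiv : ∀ k, VanishesToOrder l (fun y => withPder g j k y - withPder h j k y) x
      | .inl i => (hgh i).mono l.le_succ
      | .inr i => ((hgh' i).2 j).congr hX hx (pder_sub hX (hg i) (hh i) j)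
    refine (ih (contDiffOn_chainPder hX hF j) (contDiffOn_withPder hX hg j)
      (contDiffOn_withPder hX hh j) hderiv).congr hX hx fun y hy => ?_
    rw [pder_sub hX (contDiffOn_comp_graph hF hg) (contDiffOn_comp_graph hF hh) j hy]
    simp only [pder_comp_graph hX hF hg j hy, pder_comp_graph hX hF hh j hy]

theorem nonlinear_action_well_defined_general
    {n M : ℕ} (X : Set (Fin n → ℝ)) (hXopen : IsOpen X)
    (Sg : Set (Fin n → ℝ))
    (F : (Fin n → ℝ) → (Fin M → ℝ) → ℝ)
    (hF : ContDiffOn ℝ (⊤ : ℕ∞) (fun q : (Fin n → ℝ) × (Fin M → ℝ) => F q.1 q.2)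
      (X ×ˢ Set.univ))
    (s s' : Fin M → ℕ → (Fin n → ℝ) → ℝ)
    (hs : ∀ (i : Fin M) (ν : ℕ), ContDiffOn ℝ (⊤ : ℕ∞) (s i ν) X)
    (hs' : ∀ (i : Fin M) (ν : ℕ), ContDiffOn ℝ (⊤ : ℕ∞) (s' i ν) X)
    (hdiff : ∀ i : Fin M, memJ X Sg (fun ν => fun x => s i ν x - s' i ν x)) :
    memJ X Sg (fun ν => fun x =>
      F x (fun i => s i ν x) - F x (fun i => s' i ν x)) := by
  have ht : ∀ ν, ContDiffOn ℝ ∞ (fun x => F x (fun i => s i ν x) - F x (fun i => s' i ν x)) X :=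
    fun ν => (contDiffOn_comp_graph hF (hs · ν)).sub (contDiffOn_comp_graph hF (hs' · ν))
  refine ⟨ht, fun x hx l => ?_⟩
  choose ν hν using fun i => (hdiff i).2 x hx l
  refine ⟨Finset.univ.sup ν, fun μ hμ => ?_⟩
  have hsμ : ∀ i, VanishesToOrder l (fun y => s i μ y - s' i μ y) x := fun i =>
    (vanishesToOrder_iff_mderiv hXopen ((hs i μ).sub (hs' i μ)) hx.1).2
      (hν i μ ((Finset.le_sup (Finset.mem_univ i)).trans hμ))
  exact (vanishesToOrder_iff_mderiv hXopen (ht μ) hx.1).1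
    (vanishesToOrder_comp_sub_comp hXopen hx.1 l hF (hs · μ) (hs' · μ) hsμ)

/-- **Well-definedness of the nonlinear action (3.18).** Let `X ⊆ ℝⁿ` be a nonempty open
set, `Σ ⊆ X`, and `F : X × ℝᴹ → ℝ` jointly smooth. If, for `i = 1, …, M`, the sequences
`(s_{i,ν})` and `(s′_{i,ν})` of smooth functions on `X` have termwise differences in
`J_Σ(X)`, then the sequence `t_ν(x) = F(x, s_{1,ν}(x), …, s_{M,ν}(x)) −
F(x, s′_{1,ν}(x), …, s′_{M,ν}(x))` belongs to `J_Σ(X)`; hence `F` acts well-definedly on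
the quotient algebra `B_Σ(X) = (C^∞(X))^ℕ / J_Σ(X)`. -/
theorem nonlinear_action_well_defined
    {n M : ℕ} (X : Set (Fin n → ℝ)) (hXopen : IsOpen X) (hXne : X.Nonempty)
    (Sg : Set (Fin n → ℝ)) (hSg : Sg ⊆ X)
    (F : (Fin n → ℝ) → (Fin M → ℝ) → ℝ)
    (hF : ContDiffOn ℝ (⊤ : ℕ∞) (fun q : (Fin n → ℝ) × (Fin M → ℝ) => F q.1 q.2)
      (X ×ˢ Set.univ))
    (s s' : Fin M → ℕ → (Fin n → ℝ) → ℝ)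
    (hs : ∀ (i : Fin M) (ν : ℕ), ContDiffOn ℝ (⊤ : ℕ∞) (s i ν) X)
    (hs' : ∀ (i : Fin M) (ν : ℕ), ContDiffOn ℝ (⊤ : ℕ∞) (s' i ν) X)
    (hdiff : ∀ i : Fin M, memJ X Sg (fun ν => fun x => s i ν x - s' i ν x)) :
    memJ X Sg (fun ν => fun x =>
      F x (fun i => s i ν x) - F x (fun i => s' i ν x)) :=
  nonlinear_action_well_defined_general X hXopen Sg F hF s s' hs hs' hdiff
end
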